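/- Let 𝓡 be a nonempty compact subset of S → A → ℝ and let C(𝓡) = {R : S → A → ℝ | ∀ s, ∃ R' ∈ 𝓡, R s = R' s} be the smallest s-rectangular set containing 𝓡. Then for every policy π, every v : S → ℝ, and every state s, the robust Bellman evaluation operator applied to the non-rectangular set 𝓡 agrees with the one applied to C(𝓡): ⨅_{R ∈ 𝓡} (∑_a π s a * R(s,a) + γ * ∑_{s'} P^π(s,s') * v(s')) = ⨅_{R ∈ C(𝓡)} (∑_a π s a * R(s,a) + γ * ∑_{s'} P^π(s,s') * v(s')). -/

import Mathlib

open Finset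

/-- `P^π(s,s') = ∑ a, π s a * P s a s'`. -/
noncomputable def Pmat {S A : Type*} [Fintype A] (P : S → A → S → ℝ) (π : S → A → ℝ) :
    Matrix S S ℝ := fun s s' => ∑ a, π s a * P s a s'

/-- `C(𝓡)`, the s-rectangular hull of `𝓡`. -/
def CRect {S A : Type*} (𝓡 : Set (S → A → ℝ)) : Set (S → A → ℝ) :=
  {R : S → A → ℝ | ∀ s, ∃ R' ∈ 𝓡, R s = R' s}

section CRect

variable {S A : Type*} (𝓡 : Set (S → A → ℝ))

theorem subset_CRect : 𝓡 ⊆ CRect 𝓡 :=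
  fun R hR _ => ⟨R, hR, rfl⟩

theorem image_eval_CRect (s : S) :
    (fun R : S → A → ℝ => R s) '' CRect 𝓡 = (fun R => R s) '' 𝓡 := by
  refine Set.Subset.antisymm ?_ (Set.image_mono (subset_CRect 𝓡))
  rintro _ ⟨R, hR, rfl⟩
  obtain ⟨R', hR', hrow⟩ := hR s
  exact ⟨R', hR', hrow.symm⟩

theorem iInf_CRect_eval {α : Type*} [InfSet α] (s : S) (g : (A → ℝ) → α) :
    ⨅ R : CRect 𝓡, g ((R : S → A → ℝ) s) = ⨅ R : 𝓡, g ((R : S → A → ℝ) s) := by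
  have hrange := congrArg (g '' ·) (image_eval_CRect 𝓡 s)
  rw [Set.image_image, Set.image_image, Set.image_eq_range, Set.image_eq_range] at hrange
  exact congrArg sInf hrange

end CRect

theorem stmt_8_general {S A : Type*} [Fintype S] [Fintype A]
    (γ : ℝ)
    (P : S → A → S → ℝ)
    (π : S → A → ℝ)
    (𝓡 : Set (S → A → ℝ))
    (v : S → ℝ) (s : S) :
    (⨅ R : 𝓡, (∑ a, π s a * (R : S → A → ℝ) s a + γ * ∑ s', Pmat P π s s' * v s')) =
    (⨅ R : CRect 𝓡, (∑ a, π s a * (R : S → A → ℝ) s a + γ * ∑ s', Pmat P π s s' * v s')) :=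
  (iInf_CRect_eval 𝓡 s fun r => ∑ a, π s a * r a + γ * ∑ s', Pmat P π s s' * v s').symm

theorem stmt_8 {S A : Type*} [Fintype S] [Fintype A] [Nonempty S] [Nonempty A]
    (γ : ℝ) (hγ0 : 0 ≤ γ) (hγ1 : γ < 1)
    (P : S → A → S → ℝ) (hP : ∀ s a s', 0 ≤ P s a s')
    (hPsum : ∀ s a, ∑ s', P s a s' = 1)
    (π : S → A → ℝ) (hπ : ∀ s a, 0 ≤ π s a) (hπsum : ∀ s, ∑ a, π s a = 1)
    (𝓡 : Set (S → A → ℝ)) (h𝓡ne : 𝓡.Nonempty) (h𝓡comp : IsCompact 𝓡)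
    (v : S → ℝ) (s : S) :
    (⨅ R : 𝓡, (∑ a, π s a * (R : S → A → ℝ) s a + γ * ∑ s', Pmat P π s s' * v s')) =
    (⨅ R : CRect 𝓡, (∑ a, π s a * (R : S → A → ℝ) s a + γ * ∑ s', Pmat P π s s' * v s')) :=
  stmt_8_general γ P π 𝓡 v s
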